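/- arXiv:1901.01587 — 2 statements merged into one kernel-verified Lean document; each statement's English description precedes it below -/
import Mathlib

section
/- Let Y be a non-degenerate log-concave real random variable. Then for all u ≥ 1 and t ≥ 0, P(|Y| ≥ u·t) ≤ P(|Y| ≥ t)^{(u−1)/2}. -/
/-!
Write `p = P(|Y| ≥ t) = P(Y ≥ t) + P(Y ≤ -t)` and `u = 2s + 1`. The point `t` is the convex
combination of `u t` and `-t` with weights `1/(s+1)` and `s/(s+1)`, so log-concavity, applied to
half-lines (increasing unions of compact intervals), gives
`P(Y ≥ u t) · P(Y ≥ -t)^s ≤ P(Y ≥ t)^(s+1)`. As `P(Y ≥ -t) ≥ 1 - P(Y ≤ -t) ≥ P(Y ≥ t) / p`, this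
yields `P(Y ≥ u t) ≤ P(Y ≥ t) p^s`. The same bound for `-Y`, added to this one, gives
`P(|Y| ≥ u t) ≤ p^(s+1) ≤ p^s`.
-/

open MeasureTheory Finset Pointwise

noncomputable def maxKSum {n : ℕ} (k : ℕ) (x : Fin n → ℝ) : ℝ :=
  sSup {y | ∃ I : Finset (Fin n), I.card = k ∧ y = ∑ i ∈ I, |x i|}

noncomputable def kthMax {n : ℕ} (k : ℕ) (x : Fin n → ℝ) : ℝ :=
  sSup {t : ℝ | k ≤ (Finset.univ.filter (fun i => t ≤ |x i|)).card}

noncomputable def tk {Ω : Type*} [MeasurableSpace Ω] (μ : Measure Ω) {n : ℕ}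
    (X : Fin n → Ω → ℝ) (k : ℝ) : ℝ :=
  sInf {t : ℝ | 0 < t ∧ ∑ i, ∫ ω in {ω | t ≤ |X i ω|}, |X i ω| ∂μ ≤ k * t}

noncomputable def tstar {Ω : Type*} [MeasurableSpace Ω] (μ : Measure Ω) {n : ℕ}
    (X : Fin n → Ω → ℝ) (p : ℝ) : ℝ :=
  sInf {t : ℝ | 0 < t ∧ ∑ i, (μ {ω | t ≤ |X i ω|}).toReal ≤ p}

def IsLogConcave {E : Type*} [AddCommGroup E] [Module ℝ E] [TopologicalSpace E]
    [MeasurableSpace E] (ν : Measure E) : Prop :=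
  ∀ (K L : Set E) (l : ℝ), IsCompact K → IsCompact L → K.Nonempty → L.Nonempty →
    l ∈ Set.Icc (0 : ℝ) 1 → ν K ^ l * ν L ^ (1 - l) ≤ ν (l • K + (1 - l) • L)

noncomputable def med {Ω : Type*} [MeasurableSpace Ω] (μ : Measure Ω) (f : Ω → ℝ) : ℝ :=
  sInf {t : ℝ | (1 : ℝ) / 2 ≤ (μ {ω | f ω ≤ t}).toReal}

noncomputable def kthMaxOn {n : ℕ} (J : Finset (Fin n)) (k : ℕ) (x : Fin n → ℝ) : ℝ :=
  sSup {t : ℝ | k ≤ (J.filter (fun i => t ≤ |x i|)).card}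

open Filter

theorem IsLogConcave.measure_iUnion_rpow_mul_le {E ι : Type*} [AddCommGroup E] [Module ℝ E]
    [TopologicalSpace E] [MeasurableSpace E] [Preorder ι] [Nonempty ι] [IsDirectedOrder ι]
    [IsCountablyGenerated (atTop : Filter ι)] {ν : Measure E} [IsFiniteMeasure ν]
    (hlc : IsLogConcave ν) {l : ℝ} (hl : l ∈ Set.Icc (0 : ℝ) 1)
    {K L : ι → Set E} {M : Set E} (hK : Monotone K) (hL : Monotone L)
    (hKc : ∀ i, IsCompact (K i)) (hLc : ∀ i, IsCompact (L i))
    (hne : ∀ᶠ i in atTop, (K i).Nonempty ∧ (L i).Nonempty)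
    (hM : ∀ i, l • K i + (1 - l) • L i ⊆ M) :
    ν (⋃ i, K i) ^ l * ν (⋃ i, L i) ^ (1 - l) ≤ ν M := by
  have hlim := ENNReal.Tendsto.mul ((tendsto_measure_iUnion_atTop hK).ennrpow_const l)
    (.inr (ENNReal.rpow_ne_top_of_nonneg (sub_nonneg.2 hl.2) (measure_ne_top ν _)))
    ((tendsto_measure_iUnion_atTop hL).ennrpow_const (1 - l))
    (.inr (ENNReal.rpow_ne_top_of_nonneg hl.1 (measure_ne_top ν _)))
  refine le_of_tendsto hlim (hne.mono fun i ⟨hKi, hLi⟩ => ?_)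
  exact (hlc _ _ l (hKc i) (hLc i) hKi hLi hl).trans (measure_mono (hM i))

theorem IsLogConcave.measureReal_Ici_rpow_mul_le {ν : Measure ℝ} [IsFiniteMeasure ν]
    (hlc : IsLogConcave ν) {l : ℝ} (hl : l ∈ Set.Icc (0 : ℝ) 1) (α β : ℝ) :
    ν.real (Set.Ici α) ^ l * ν.real (Set.Ici β) ^ (1 - l) ≤
      ν.real (Set.Ici (l * α + (1 - l) * β)) := by
  have h := hlc.measure_iUnion_rpow_mul_le hl (K := fun b => Set.Icc α b)
    (L := fun b => Set.Icc β b) (M := Set.Ici (l * α + (1 - l) * β))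
    (fun _ _ h => Set.Icc_subset_Icc_right h) (fun _ _ h => Set.Icc_subset_Icc_right h)
    (fun _ => isCompact_Icc) (fun _ => isCompact_Icc)
    ((eventually_ge_atTop (max α β)).mono fun b hb =>
      ⟨Set.nonempty_Icc.2 (le_of_max_le_left hb), Set.nonempty_Icc.2 (le_of_max_le_right hb)⟩)
    (by
      rintro b _ ⟨_, ⟨x, hx, rfl⟩, _, ⟨y, hy, rfl⟩, rfl⟩
      simp only [smul_eq_mul, Set.mem_Ici]
      nlinarith [hx.1, hy.1, hl.1, hl.2])
  simp only [Set.iUnion_Icc_right] at h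
  simpa [measureReal_def, ENNReal.toReal_mul, ENNReal.toReal_rpow] using
    ENNReal.toReal_mono (measure_ne_top ν _) h

theorem IsLogConcave.map_neg {E : Type*} [AddCommGroup E] [Module ℝ E] [TopologicalSpace E]
    [ContinuousNeg E] [MeasurableSpace E] [MeasurableNeg E] {ν : Measure E}
    (hlc : IsLogConcave ν) : IsLogConcave (ν.map Neg.neg) := by
  intro K L l hK hL hKne hLne hl
  have hmap (S : Set E) : ν.map Neg.neg S = ν (-S) := (MeasurableEquiv.neg E).map_apply S
  rw [hmap, hmap, hmap, neg_add, ← Set.smul_set_neg, ← Set.smul_set_neg]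
  exact hlc _ _ l hK.neg hL.neg hKne.neg hLne.neg hl

theorem mul_rpow_le_rpow_add_one_of_rpow_mul_rpow_le {A C a s : ℝ} (hA : 0 ≤ A) (hC : 0 ≤ C)
    (hs : 0 ≤ s) (h : A ^ (1 / (s + 1)) * C ^ (s / (s + 1)) ≤ a) : A * C ^ s ≤ a ^ (s + 1) := by
  have hs1 : s + 1 ≠ 0 := by positivity
  calc A * C ^ s = (A ^ (1 / (s + 1)) * C ^ (s / (s + 1))) ^ (s + 1) := by
        rw [Real.mul_rpow (by positivity) (by positivity), ← Real.rpow_mul hA, ← Real.rpow_mul hC,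
          div_mul_cancel₀ _ hs1, div_mul_cancel₀ _ hs1, Real.rpow_one]
    _ ≤ a ^ (s + 1) := Real.rpow_le_rpow (by positivity) h (by positivity)

theorem le_mul_rpow_of_mul_rpow_le_rpow_add_one {A C a c s : ℝ} (ha : 0 ≤ a) (hc : 0 ≤ c)
    (hC : 0 ≤ C) (hs : 0 ≤ s) (hAa : A ≤ a) (haC : a ≤ c * C) (h : A * C ^ s ≤ a ^ (s + 1)) :
    A ≤ a * c ^ s := by
  rcases hC.eq_or_lt with rfl | hC
  · obtain rfl : a = 0 := le_antisymm (by simpa using haC) ha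
    simpa using hAa
  refine le_of_mul_le_mul_right ?_ (Real.rpow_pos_of_pos hC s)
  calc A * C ^ s ≤ a ^ s * a := (Real.rpow_add_one' ha (by positivity)).subst h
    _ ≤ (c * C) ^ s * a := by gcongr
    _ = a * c ^ s * C ^ s := by rw [Real.mul_rpow hc hC.le]; ring

theorem IsLogConcave.measureReal_Ici_le_mul_rpow {ν : Measure ℝ} [IsProbabilityMeasure ν]
    (hlc : IsLogConcave ν) {s t : ℝ} (hs : 0 ≤ s) (ht : 0 < t) :
    ν.real (Set.Ici ((2 * s + 1) * t)) ≤
      ν.real (Set.Ici t) * (ν.real (Set.Ici t) + ν.real (Set.Iic (-t))) ^ s := by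
  have hs1 : 0 < s + 1 := by linarith
  have hconv := hlc.measureReal_Ici_rpow_mul_le (l := 1 / (s + 1))
    ⟨by positivity, (div_le_one hs1).2 (by linarith)⟩ ((2 * s + 1) * t) (-t)
  rw [show 1 - 1 / (s + 1) = s / (s + 1) by field_simp; ring,
    show 1 / (s + 1) * ((2 * s + 1) * t) + s / (s + 1) * -t = t by field_simp; ring] at hconv
  have hcover : 1 ≤ ν.real (Set.Iic (-t)) + ν.real (Set.Ici (-t)) := by
    simpa [Set.Iic_union_Ici] using measureReal_union_le (μ := ν) (Set.Iic (-t)) (Set.Ici (-t))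
  have htails : ν.real (Set.Ici t) + ν.real (Set.Iic (-t)) ≤ 1 := by
    rw [← measureReal_union (Set.Iic_disjoint_Ici.2 (by linarith)).symm measurableSet_Iic]
    exact measureReal_le_one
  have ha : 0 ≤ ν.real (Set.Ici t) := measureReal_nonneg
  have hb : 0 ≤ ν.real (Set.Iic (-t)) := measureReal_nonneg
  refine le_mul_rpow_of_mul_rpow_le_rpow_add_one ha (by positivity) measureReal_nonneg hs
    (measureReal_mono (Set.Ici_subset_Ici.2 (by nlinarith))) ?_
    (mul_rpow_le_rpow_add_one_of_rpow_mul_rpow_le measureReal_nonneg measureReal_nonneg hs hconv)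
  nlinarith [mul_nonneg hb (sub_nonneg.2 htails)]

theorem IsLogConcave.measureReal_le_abs_le_rpow {ν : Measure ℝ} [IsProbabilityMeasure ν]
    (hlc : IsLogConcave ν) {s t : ℝ} (hs : 0 ≤ s) (ht : 0 < t) :
    ν.real {x | (2 * s + 1) * t ≤ |x|} ≤ ν.real {x | t ≤ |x|} ^ (s + 1) := by
  have habs (r : ℝ) : {x : ℝ | r ≤ |x|} = Set.Ici r ∪ Set.Iic (-r) := by
    ext x
    simp only [Set.mem_ofPred_eq, Set.mem_union, Set.mem_Ici, Set.mem_Iic, le_abs, le_neg]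
  have htail : ν.real {x | t ≤ |x|} = ν.real (Set.Ici t) + ν.real (Set.Iic (-t)) := by
    rw [habs, measureReal_union (Set.Iic_disjoint_Ici.2 (by linarith)).symm measurableSet_Iic]
  have := Measure.isProbabilityMeasure_map (μ := ν) measurable_neg.aemeasurable
  have hright := hlc.measureReal_Ici_le_mul_rpow hs ht
  have hleft := hlc.map_neg.measureReal_Ici_le_mul_rpow hs ht
  simp only [map_measureReal_apply measurable_neg measurableSet_Ici,
    map_measureReal_apply measurable_neg measurableSet_Iic, Set.neg_preimage, Set.neg_Ici,
    Set.neg_Iic, neg_neg, add_comm (ν.real (Set.Iic (-t)))] at hleft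
  rw [htail, Real.rpow_add_one' (by positivity) (by positivity), habs]
  calc _ ≤ ν.real (Set.Ici ((2 * s + 1) * t)) + ν.real (Set.Iic (-((2 * s + 1) * t))) :=
        measureReal_union_le _ _
    _ ≤ _ := add_le_add hright hleft
    _ = _ := by ring

theorem stmt_9_general {Ω : Type*} [MeasurableSpace Ω] (μ : Measure Ω) [IsProbabilityMeasure μ]
    (Y : Ω → ℝ) (hmeas : Measurable Y) (hlc : IsLogConcave (μ.map Y)) :
    ∀ u t : ℝ, 1 ≤ u → 0 ≤ t →
      (μ {ω | u * t ≤ |Y ω|}).toReal ≤ (μ {ω | t ≤ |Y ω|}).toReal ^ ((u - 1) / 2) := by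
  intro u t hu ht
  have := Measure.isProbabilityMeasure_map (μ := μ) hmeas.aemeasurable
  have htail (r : ℝ) : (μ {ω | r ≤ |Y ω|}).toReal = (μ.map Y).real {x | r ≤ |x|} :=
    (map_measureReal_apply hmeas (measurableSet_le measurable_const measurable_abs)).symm
  rcases ht.eq_or_lt with rfl | ht
  · simp
  have hs : 0 ≤ (u - 1) / 2 := by linarith
  calc (μ {ω | u * t ≤ |Y ω|}).toReal
      = (μ.map Y).real {x | (2 * ((u - 1) / 2) + 1) * t ≤ |x|} := by rw [htail]; ring_nf
    _ ≤ (μ.map Y).real {x | t ≤ |x|} ^ ((u - 1) / 2 + 1) := hlc.measureReal_le_abs_le_rpow hs ht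
    _ ≤ (μ.map Y).real {x | t ≤ |x|} ^ ((u - 1) / 2) :=
      Real.rpow_le_rpow_of_exponent_ge' measureReal_nonneg measureReal_le_one hs (by linarith)
    _ = (μ {ω | t ≤ |Y ω|}).toReal ^ ((u - 1) / 2) := by rw [htail]

theorem stmt_9 {Ω : Type*} [MeasurableSpace Ω] (μ : Measure Ω) [IsProbabilityMeasure μ]
    (Y : Ω → ℝ) (hmeas : Measurable Y) (hlc : IsLogConcave (μ.map Y))
    (hnd : ∀ c : ℝ, μ.map Y ≠ Measure.dirac c) :
    ∀ u t : ℝ, 1 ≤ u → 0 ≤ t →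
      (μ {ω | u * t ≤ |Y ω|}).toReal ≤ (μ {ω | t ≤ |Y ω|}).toReal ^ ((u - 1) / 2) :=
  stmt_9_general μ Y hmeas hlc
end

section
/- Let X = (X_1,...,X_n) be a random vector whose coordinates satisfy P(|X_i| ≥ s, |X_j| ≥ t) ≤ α·P(|X_i| ≥ s)·P(|X_j| ≥ t) for all i ≠ j and s,t > 0, with some α ≥ 1. Then there exists a constant c(α) > 0 depending only on α (one may take c(α) = (36(5+4α)(1+2α))^{-1}) such that for all 1 ≤ k ≤ n: c(α)·k·t(k,X) ≤ E[max_{|I|=k} Σ_{i∈I}|X_i|] ≤ 2·k·t(k,X). -/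
open MeasureTheory Finset Pointwise

/-!
Write `N_s = #{i | s ≤ |X_i|}` and `p(s) = E N_s = ∑ᵢ P(|X_i| ≥ s)`.

Upper bound: if `t > 0` satisfies `∑ᵢ E |X_i| 1{|X_i| ≥ t} ≤ k t`, then any `k` coordinates sum to
at most `k t + ∑ᵢ |X_i| 1{|X_i| ≥ t}`, whose expectation is at most `2 k t`.

Lower bound: the `k` largest coordinates give `∫₀^∞ min(N_s, k) ds ≤ max_{|I| = k} ∑_{i ∈ I} |X_i|`.
For fixed `s` the events `{|X_i| ≥ s}` are pairwise `α`-correlated, so a subfamily `J` with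
`Q = ∑_J P(|X_i| ≥ s)` comparable to `min(p(s), k / 2α)` has `E (∑_J 1{|X_i| ≥ s})² ≤ Q + α Q²`;
with `m - m(m-1)/k ≤ min(M, k)` for `m ≤ M` this yields `E min(N_s, k) ≥ min(p(s), k) / 8α`.
For `t < t(k, X)` the layer-cake formula turns `k t < ∑ᵢ E |X_i| 1{|X_i| ≥ t}` into
`k t ≤ ∫₀^∞ min(p(s), k) ds`, and Fubini gives `k t(k, X) / 8α ≤ E max_{|I| = k} ∑_{i ∈ I} |X_i|`.
-/

section MaxKSum

variable {n k : ℕ}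

theorem powersetCard_univ_fin_nonempty (hk : k ≤ n) :
    (powersetCard k (univ : Finset (Fin n))).Nonempty :=
  powersetCard_nonempty.2 (by simpa using hk)

theorem maxKSum_eq_sup' (hk : k ≤ n) (x : Fin n → ℝ) :
    maxKSum k x =
      (powersetCard k univ).sup' (powersetCard_univ_fin_nonempty hk) (∑ i ∈ ·, |x i|) := by
  rw [maxKSum, sup'_eq_csSup_image]
  congr 1
  ext y
  simp [eq_comm]

theorem le_maxKSum (hk : k ≤ n) (x : Fin n → ℝ) {I : Finset (Fin n)} (hI : #I = k) :
    ∑ i ∈ I, |x i| ≤ maxKSum k x := by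
  rw [maxKSum_eq_sup' hk]
  exact le_sup' (fun I => ∑ i ∈ I, |x i|) (mem_powersetCard_univ.2 hI)

theorem maxKSum_le (hk : k ≤ n) (x : Fin n → ℝ) {B : ℝ}
    (hB : ∀ I : Finset (Fin n), #I = k → ∑ i ∈ I, |x i| ≤ B) : maxKSum k x ≤ B := by
  rw [maxKSum_eq_sup' hk]
  exact sup'_le _ _ fun I hI => hB I (mem_powersetCard_univ.1 hI)

theorem maxKSum_nonneg (hk : k ≤ n) (x : Fin n → ℝ) : 0 ≤ maxKSum k x := by
  obtain ⟨I, -, hI⟩ := exists_subset_card_eq (show k ≤ #(univ : Finset (Fin n)) by simpa using hk)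
  exact (sum_nonneg fun i _ => abs_nonneg _).trans (le_maxKSum hk x hI)

theorem maxKSum_le_sum_abs (hk : k ≤ n) (x : Fin n → ℝ) : maxKSum k x ≤ ∑ i, |x i| :=
  maxKSum_le hk x fun I _ =>
    sum_le_sum_of_subset_of_nonneg (subset_univ I) fun _ _ _ => abs_nonneg _

theorem maxKSum_le_mul_add_sum_ite (hk : k ≤ n) (x : Fin n → ℝ) {t : ℝ} (ht : 0 ≤ t) :
    maxKSum k x ≤ k * t + ∑ i, if t ≤ |x i| then |x i| else 0 := by
  refine maxKSum_le hk x fun I hI => ?_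
  have hle : ∀ i, |x i| ≤ t + if t ≤ |x i| then |x i| else 0 := fun i => by
    split_ifs with h <;> linarith
  calc ∑ i ∈ I, |x i| ≤ ∑ i ∈ I, (t + if t ≤ |x i| then |x i| else 0) := sum_le_sum fun i _ => hle i
    _ = k * t + ∑ i ∈ I, if t ≤ |x i| then |x i| else 0 := by
      rw [sum_add_distrib, sum_const, nsmul_eq_mul, hI]
    _ ≤ k * t + ∑ i, if t ≤ |x i| then |x i| else 0 := by
      gcongr
      exact subset_univ I

theorem measurable_maxKSum {Ω : Type*} [MeasurableSpace Ω] {X : Fin n → Ω → ℝ}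
    (hX : ∀ i, Measurable (X i)) (hk : k ≤ n) : Measurable fun ω => maxKSum k (X · ω) := by
  have h := measurable_sup' (powersetCard_univ_fin_nonempty hk)
    (f := fun I ω => ∑ i ∈ I, |X i ω|) fun I _ => measurable_sum I fun i _ => (hX i).abs
  convert h using 1
  ext ω
  rw [maxKSum_eq_sup' hk, Finset.sup'_apply]

end MaxKSum

section TopK

variable {ι β : Type*} [Fintype ι] [DecidableEq ι] [LinearOrder β]

theorem exists_card_eq_forall_le_of_notMem (f : ι → β) {k : ℕ} (hk : k ≤ Fintype.card ι) :
    ∃ I : Finset ι, #I = k ∧ ∀ i ∉ I, ∀ j ∈ I, f i ≤ f j := by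
  induction k with
  | zero => exact ⟨∅, rfl, by simp⟩
  | succ k ih =>
    obtain ⟨I, hIcard, hI⟩ := ih (by omega)
    have hne : Iᶜ.Nonempty := by
      rw [← card_pos, card_compl, hIcard]
      omega
    obtain ⟨a, ha, hamax⟩ := exists_max_image Iᶜ f hne
    rw [mem_compl] at ha
    refine ⟨insert a I, by rw [card_insert_of_notMem ha, hIcard], fun i hi j hj => ?_⟩
    rw [mem_insert, not_or] at hi
    obtain rfl | hj := mem_insert.1 hj
    · exact hamax i (mem_compl.2 hi.2)
    · exact hI i hi.2 j hj

theorem min_card_filter_le_card_filter {f : ι → β} {I : Finset ι}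
    (hI : ∀ i ∉ I, ∀ j ∈ I, f i ≤ f j) (s : β) :
    min #{i | s ≤ f i} #I ≤ #{i ∈ I | s ≤ f i} := by
  by_cases h : ∃ i ∉ I, s ≤ f i
  · obtain ⟨i, hi, hsi⟩ := h
    rw [filter_true_of_mem fun j hj => hsi.trans (hI i hi j hj)]
    exact min_le_right _ _
  · push Not at h
    refine (min_le_left _ _).trans (card_le_card fun i hi => ?_)
    rw [mem_filter] at hi ⊢
    exact ⟨by_contra fun hiI => (h i hiI).not_ge hi.2, hi.2⟩

end TopK

theorem setIntegral_Ioi_zero_indicator_Iic {c : ℝ} (hc : 0 ≤ c) :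
    ∫ s in Set.Ioi 0, (Set.Iic c).indicator 1 s = c := by
  rw [integral_indicator_one measurableSet_Iic, measureReal_restrict_apply measurableSet_Iic,
    Set.Iic_inter_Ioi, Real.volume_real_Ioc_of_le hc, sub_zero]

theorem integrableOn_Ioi_zero_indicator_Iic (c : ℝ) :
    IntegrableOn ((Set.Iic c).indicator (1 : ℝ → ℝ)) (Set.Ioi 0) := by
  refine (integrable_indicator_iff measurableSet_Iic).2 (integrableOn_const ?_)
  rw [Measure.restrict_apply measurableSet_Iic, Set.Iic_inter_Ioi]
  exact measure_Ioc_lt_top.ne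

theorem integral_min_card_le_maxKSum {n k : ℕ} (hk : k ≤ n) (x : Fin n → ℝ) :
    ∫ s in Set.Ioi 0, min (#{i | s ≤ |x i|} : ℝ) k ≤ maxKSum k x := by
  obtain ⟨I, hIcard, hI⟩ :=
    exists_card_eq_forall_le_of_notMem (fun i => |x i|) (hk.trans (Fintype.card_fin n).ge)
  have hcount : ∀ s, min (#{i | s ≤ |x i|} : ℝ) k ≤ ∑ i ∈ I, (Set.Iic |x i|).indicator 1 s :=
    fun s => by
      rw [← hIcard, ← Nat.cast_min]
      refine (Nat.cast_le.2 (min_card_filter_le_card_filter hI s)).trans_eq ?_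
      simp only [Set.indicator_apply, Set.mem_Iic, Pi.one_apply, sum_boole]
  calc ∫ s in Set.Ioi 0, min (#{i | s ≤ |x i|} : ℝ) k
      ≤ ∫ s in Set.Ioi 0, ∑ i ∈ I, (Set.Iic |x i|).indicator 1 s :=
        integral_mono_of_nonneg (.of_forall fun s => by positivity)
          (integrable_finsetSum I fun i _ => integrableOn_Ioi_zero_indicator_Iic _)
          (.of_forall hcount)
    _ = ∑ i ∈ I, |x i| := by
      rw [integral_finsetSum I fun i _ => integrableOn_Ioi_zero_indicator_Iic _]
      exact sum_congr rfl fun i _ => setIntegral_Ioi_zero_indicator_Iic (abs_nonneg _)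
    _ ≤ maxKSum k x := le_maxKSum hk x hIcard

theorem sub_mul_sub_one_div_le_min {m M k : ℕ} (hmM : m ≤ M) (hk : 1 ≤ k) :
    (m : ℝ) - m * (m - 1) / k ≤ min (M : ℝ) k := by
  have hk0 : (0 : ℝ) < k := by exact_mod_cast hk
  rcases le_or_gt m k with h | h
  · have hsq : (0 : ℝ) ≤ m * (m - 1) := by
      rcases Nat.eq_zero_or_pos m with rfl | hm
      · simp
      · have : (1 : ℝ) ≤ m := by exact_mod_cast hm
        nlinarith
    have : (m : ℝ) ≤ min (M : ℝ) k := le_min (by exact_mod_cast hmM) (by exact_mod_cast h)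
    linarith [div_nonneg hsq hk0.le]
  · have hkM : min (M : ℝ) k = k := min_eq_right (by exact_mod_cast (h.trans_le hmM).le)
    have hm : (k : ℝ) + 1 ≤ m := by exact_mod_cast h
    rw [hkM, sub_le_iff_le_add, ← sub_le_iff_le_add', le_div_iff₀ hk0]
    nlinarith

theorem exists_sum_mem_Icc_of_le_half {ι : Type*} [Fintype ι] {q : ι → ℝ} {β : ℝ}
    (hβ : 0 ≤ β) (hsum : β ≤ ∑ i, q i) (hsmall : ∀ i, q i ≤ β / 2) :
    ∃ J : Finset ι, β / 2 ≤ ∑ i ∈ J, q i ∧ ∑ i ∈ J, q i ≤ β := by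
  classical
  obtain ⟨J, hJ, hmax⟩ := exists_max_image {J : Finset ι | ∑ i ∈ J, q i ≤ β}
    (fun J => ∑ i ∈ J, q i) ⟨∅, by simpa using hβ⟩
  rw [mem_filter] at hJ
  refine ⟨J, not_lt.1 fun hlt => ?_, hJ.2⟩
  have hout : ∀ i ∈ Jᶜ, q i ≤ 0 := fun i hi => by
    rw [mem_compl] at hi
    have := hmax (insert i J) (mem_filter.2 ⟨mem_univ _, by
      rw [sum_insert hi]; linarith [hsmall i]⟩)
    rw [sum_insert hi] at this
    linarith
  linarith [sum_add_sum_compl J q, sum_nonpos hout]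

theorem min_le_two_mul_mul_min_div {P k α : ℝ} (hP : 0 ≤ P) (hα : 1 ≤ α) :
    min P k ≤ 2 * α * min P (k / (2 * α)) := by
  rcases min_cases P (k / (2 * α)) with ⟨h, -⟩ | ⟨h, -⟩
  · rw [h]
    nlinarith [min_le_left P k]
  · rw [h, mul_div_cancel₀ _ (by positivity)]
    exact min_le_right _ _

theorem indicator_one_nonneg {α : Type*} (s : Set α) (a : α) : 0 ≤ s.indicator (1 : α → ℝ) a :=
  Set.indicator_apply_nonneg fun _ => zero_le_one

theorem sum_indicator_one_eq_card {Ω ι : Type*} (A : ι → Set Ω) [∀ i ω, Decidable (ω ∈ A i)]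
    (J : Finset ι) (ω : Ω) :
    ∑ i ∈ J, (A i).indicator (1 : Ω → ℝ) ω = #{i ∈ J | ω ∈ A i} := by
  simp only [Set.indicator_apply, Pi.one_apply, sum_boole]

theorem sq_sum_indicator_one {Ω ι : Type*} (A : ι → Set Ω) (J : Finset ι) (ω : Ω) :
    (∑ i ∈ J, (A i).indicator (1 : Ω → ℝ) ω) ^ 2 =
      ∑ i ∈ J, ∑ j ∈ J, (A i ∩ A j).indicator (1 : Ω → ℝ) ω := by
  simp_rw [sq, sum_mul_sum, Set.inter_indicator_one, Pi.mul_apply]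

section Events

variable {Ω ι : Type*} [MeasurableSpace Ω] {μ : Measure Ω} [IsFiniteMeasure μ]
  {A : ι → Set Ω}

theorem integrable_indicator_one {s : Set Ω} (hs : MeasurableSet s) :
    Integrable (s.indicator (1 : Ω → ℝ)) μ :=
  (integrable_const (1 : ℝ)).indicator hs

theorem integral_sum_indicator_one (hA : ∀ i, MeasurableSet (A i)) (J : Finset ι) :
    ∫ ω, ∑ i ∈ J, (A i).indicator (1 : Ω → ℝ) ω ∂μ = ∑ i ∈ J, μ.real (A i) := by
  rw [integral_finsetSum J fun i _ => integrable_indicator_one (hA i)]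
  exact sum_congr rfl fun i _ => integral_indicator_one (hA i)

theorem integrable_sq_sum_indicator_one (hA : ∀ i, MeasurableSet (A i)) (J : Finset ι) :
    Integrable (fun ω => (∑ i ∈ J, (A i).indicator (1 : Ω → ℝ) ω) ^ 2) μ := by
  simp_rw [sq_sum_indicator_one]
  exact integrable_finsetSum J fun i _ => integrable_finsetSum J fun j _ =>
    integrable_indicator_one ((hA i).inter (hA j))

theorem integral_sq_sum_indicator_one (hA : ∀ i, MeasurableSet (A i)) (J : Finset ι) :
    ∫ ω, (∑ i ∈ J, (A i).indicator (1 : Ω → ℝ) ω) ^ 2 ∂μ =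
      ∑ i ∈ J, ∑ j ∈ J, μ.real (A i ∩ A j) := by
  have hint : ∀ i j, Integrable ((A i ∩ A j).indicator (1 : Ω → ℝ)) μ := fun i j =>
    integrable_indicator_one ((hA i).inter (hA j))
  simp_rw [sq_sum_indicator_one]
  rw [integral_finsetSum J fun i _ => integrable_finsetSum J fun j _ => hint i j]
  refine sum_congr rfl fun i _ => ?_
  rw [integral_finsetSum J fun j _ => hint i j]
  exact sum_congr rfl fun j _ => integral_indicator_one ((hA i).inter (hA j))

theorem integrable_min_sum_indicator [Fintype ι] (hA : ∀ i, MeasurableSet (A i)) (k : ℝ) :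
    Integrable (fun ω => min (∑ i, (A i).indicator (1 : Ω → ℝ) ω) k) μ :=
  (integrable_finsetSum univ fun i _ => integrable_indicator_one (hA i)).inf (integrable_const k)

variable {α : ℝ}

theorem integral_sq_sum_indicator_le (hA : ∀ i, MeasurableSet (A i)) (hα : 0 ≤ α)
    (hpair : ∀ i j, i ≠ j → μ.real (A i ∩ A j) ≤ α * μ.real (A i) * μ.real (A j))
    (J : Finset ι) :
    ∫ ω, (∑ i ∈ J, (A i).indicator (1 : Ω → ℝ) ω) ^ 2 ∂μ ≤
      ∑ i ∈ J, μ.real (A i) + α * (∑ i ∈ J, μ.real (A i)) ^ 2 := by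
  classical
  have hpair' : ∀ i j, μ.real (A i ∩ A j) ≤
      (if i = j then μ.real (A i) else 0) + α * μ.real (A i) * μ.real (A j) := fun i j => by
    by_cases h : i = j
    · subst h
      rw [Set.inter_self, if_pos rfl, le_add_iff_nonneg_right]
      positivity
    · simpa [h] using hpair i j h
  calc ∫ ω, (∑ i ∈ J, (A i).indicator (1 : Ω → ℝ) ω) ^ 2 ∂μ
      = ∑ i ∈ J, ∑ j ∈ J, μ.real (A i ∩ A j) := integral_sq_sum_indicator_one hA J
    _ ≤ ∑ i ∈ J, ∑ j ∈ J,
          ((if i = j then μ.real (A i) else 0) + α * μ.real (A i) * μ.real (A j)) := by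
        gcongr with i _ j _
        exact hpair' i j
    _ = ∑ i ∈ J, μ.real (A i) + α * (∑ i ∈ J, μ.real (A i)) ^ 2 := by
        simp_rw [sum_add_distrib, sum_ite_eq]
        rw [sum_congr rfl fun i hi => if_pos hi, sq, sum_mul_sum, mul_sum]
        simp_rw [mul_sum, mul_assoc]

theorem sum_measureReal_sub_le_integral_min [Fintype ι] (hA : ∀ i, MeasurableSet (A i))
    (hα : 0 ≤ α)
    (hpair : ∀ i j, i ≠ j → μ.real (A i ∩ A j) ≤ α * μ.real (A i) * μ.real (A j))
    {k : ℕ} (hk : 1 ≤ k) (J : Finset ι) :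
    ∑ i ∈ J, μ.real (A i) - α * (∑ i ∈ J, μ.real (A i)) ^ 2 / k ≤
      ∫ ω, min (∑ i, (A i).indicator (1 : Ω → ℝ) ω) k ∂μ := by
  classical
  have hS2 := integrable_sq_sum_indicator_one (μ := μ) hA J
  have hES := integral_sum_indicator_one (μ := μ) hA J
  have hES2le := integral_sq_sum_indicator_le hA hα hpair J
  set S : Ω → ℝ := fun ω => ∑ i ∈ J, (A i).indicator 1 ω
  set Q := ∑ i ∈ J, μ.real (A i)
  have hS : Integrable S μ := integrable_finsetSum J fun i _ => integrable_indicator_one (hA i)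
  have hR : Integrable (fun ω => (S ω ^ 2 - S ω) / k) μ := (hS2.sub hS).div_const _
  have hpoint : ∀ ω, S ω - (S ω ^ 2 - S ω) / k ≤
      min (∑ i, (A i).indicator (1 : Ω → ℝ) ω) k := fun ω => by
    have := sub_mul_sub_one_div_le_min
      (card_le_card (filter_subset_filter (fun i => ω ∈ A i) (subset_univ J))) hk
    simp only [S, sum_indicator_one_eq_card]
    convert this using 2
    ring
  calc Q - α * Q ^ 2 / k ≤ Q - (∫ ω, S ω ^ 2 ∂μ - Q) / k := by
        gcongr
        linarith
    _ = ∫ ω, S ω - (S ω ^ 2 - S ω) / k ∂μ := by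
        rw [integral_sub hS hR, integral_div, integral_sub hS2 hS, hES]
    _ ≤ ∫ ω, min (∑ i, (A i).indicator (1 : Ω → ℝ) ω) k ∂μ :=
        integral_mono (hS.sub hR) (integrable_min_sum_indicator hA _) hpoint

theorem measureReal_le_integral_min_sum_indicator [Fintype ι] (hA : ∀ i, MeasurableSet (A i))
    {k : ℕ} (hk : 1 ≤ k) (i : ι) :
    μ.real (A i) ≤ ∫ ω, min (∑ j, (A j).indicator (1 : Ω → ℝ) ω) k ∂μ := by
  rw [← integral_indicator_one (hA i)]
  refine integral_mono (integrable_indicator_one (hA i)) (integrable_min_sum_indicator hA _)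
    fun ω => le_min ?_ ?_
  · exact single_le_sum (f := fun j => (A j).indicator (1 : Ω → ℝ) ω)
      (fun j _ => indicator_one_nonneg _ ω) (mem_univ i)
  · have : (1 : ℝ) ≤ k := by exact_mod_cast hk
    exact (Set.indicator_le_self' (fun _ _ => zero_le_one) ω).trans this

theorem min_sum_measureReal_div_le_integral_min [Fintype ι] (hA : ∀ i, MeasurableSet (A i))
    (hα : 1 ≤ α) (hpair : ∀ i j, i ≠ j → μ.real (A i ∩ A j) ≤ α * μ.real (A i) * μ.real (A j))
    {k : ℕ} (hk : 1 ≤ k) :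
    min (∑ i, μ.real (A i)) k / (8 * α) ≤
      ∫ ω, min (∑ i, (A i).indicator (1 : Ω → ℝ) ω) k ∂μ := by
  have hα0 : 0 < α := by linarith
  have hk0 : (0 : ℝ) < k := by exact_mod_cast hk
  set P := ∑ i, μ.real (A i)
  -- `β ≤ k / (2α)` makes the loss `α Q² / k` at most `Q / 2` for every `Q ≤ β`
  set β := min P (k / (2 * α))
  have hβ0 : 0 ≤ β := le_min (sum_nonneg fun i _ => measureReal_nonneg) (by positivity)
  have hβk : 2 * α * β ≤ k := by
    have := min_le_right P (k / (2 * α))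
    rw [le_div_iff₀ (by positivity)] at this
    linarith
  suffices hβ : β / 4 ≤ ∫ ω, min (∑ i, (A i).indicator (1 : Ω → ℝ) ω) k ∂μ by
    calc min P k / (8 * α) ≤ 2 * α * β / (8 * α) := by
          gcongr
          exact min_le_two_mul_mul_min_div (sum_nonneg fun i _ => measureReal_nonneg) hα
      _ = β / 4 := by field_simp; ring
      _ ≤ _ := hβ
  by_cases hbig : ∃ i, β / 2 < μ.real (A i)
  · obtain ⟨i, hi⟩ := hbig
    linarith [measureReal_le_integral_min_sum_indicator (μ := μ) hA hk i]
  · push Not at hbig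
    obtain ⟨J, hJlo, hJhi⟩ := exists_sum_mem_Icc_of_le_half hβ0 (min_le_left _ _) hbig
    have hJ := sum_measureReal_sub_le_integral_min hA hα0.le hpair hk J
    set Q := ∑ i ∈ J, μ.real (A i)
    have hQ0 : 0 ≤ Q := by linarith
    have h2αQ : 2 * α * Q ≤ k := le_trans (by gcongr) hβk
    have : α * Q ^ 2 / k ≤ Q / 2 := by
      rw [div_le_div_iff₀ hk0 two_pos]
      nlinarith [mul_le_mul_of_nonneg_left h2αQ hQ0]
    linarith

end Events

section Tail

variable {Ω : Type*} [MeasurableSpace Ω] {μ : Measure Ω}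

theorem antitone_measureReal_le [IsFiniteMeasure μ] (f : Ω → ℝ) :
    Antitone fun s => μ.real {ω | s ≤ f ω} := fun _ _ hst =>
  measureReal_mono fun _ hω => hst.trans hω

theorem integrableOn_Ioi_measureReal_le [IsFiniteMeasure μ] {f : Ω → ℝ} (hf : Integrable f μ)
    (hnn : 0 ≤ᵐ[μ] f) : IntegrableOn (fun s => μ.real {ω | s ≤ f ω}) (Set.Ioi 0) := by
  refine integrable_toReal_of_lintegral_ne_top ?_ ?_
  · exact (Antitone.measurable (f := fun s : ℝ => μ {ω | s ≤ f ω})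
      fun _ _ hst => measure_mono fun _ hω => hst.trans hω).aemeasurable
  · rw [← lintegral_eq_lintegral_meas_le μ hnn hf.aemeasurable]
    exact hf.lintegral_lt_top.ne

theorem setIntegral_abs_ge_eq_integral_measureReal {f : Ω → ℝ} (hf : Integrable f μ)
    (hfm : Measurable f) (t : ℝ) :
    ∫ ω in {ω | t ≤ |f ω|}, |f ω| ∂μ = ∫ s in Set.Ioi 0, μ.real {ω | max s t ≤ |f ω|} := by
  have hmeas : MeasurableSet {ω | t ≤ |f ω|} := measurableSet_le measurable_const hfm.abs
  rw [← integral_indicator hmeas, (hf.abs.indicator hmeas).integral_eq_integral_meas_le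
    (.of_forall fun ω => Set.indicator_nonneg (fun _ _ => abs_nonneg _) ω)]
  refine setIntegral_congr_fun measurableSet_Ioi fun s (hs : 0 < s) => ?_
  congr 1
  ext ω
  by_cases h : t ≤ |f ω|
  · simp [h]
  · simp [h, hs]

variable [IsFiniteMeasure μ] {ι : Type*} [Fintype ι] {X : ι → Ω → ℝ}

theorem mul_le_integral_min_sum_measureReal (hX : ∀ i, Measurable (X i))
    (hint : ∀ i, Integrable (X i) μ) {k t : ℝ} (hk : 0 ≤ k) (ht : 0 < t)
    (hgt : k * t < ∑ i, ∫ ω in {ω | t ≤ |X i ω|}, |X i ω| ∂μ) :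
    k * t ≤ ∫ s in Set.Ioi 0, min (∑ i, μ.real {ω | s ≤ |X i ω|}) k := by
  set p : ℝ → ℝ := fun s => ∑ i, μ.real {ω | s ≤ |X i ω|}
  have hp_anti : Antitone p := fun _ _ hst =>
    sum_le_sum fun i _ => antitone_measureReal_le (μ := μ) (fun ω => |X i ω|) hst
  have hp_int : IntegrableOn p (Set.Ioi 0) := integrable_finsetSum univ fun i _ =>
    integrableOn_Ioi_measureReal_le (hint i).abs (.of_forall fun ω => abs_nonneg _)
  have hp_nonneg : ∀ s, 0 ≤ p s := fun s => sum_nonneg fun i _ => measureReal_nonneg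
  have hmin_int : IntegrableOn (fun s => min (p s) k) (Set.Ioi 0) :=
    hp_int.mono' (hp_anti.measurable.min measurable_const).aestronglyMeasurable
      (.of_forall fun s => by
        rw [Real.norm_of_nonneg (le_min (hp_nonneg s) hk)]
        exact min_le_left _ _)
  rcases lt_or_ge (p t) k with hpt | hpt
  · -- by the layer-cake formula the tail sum is `∫ p (max s t) ds`, and here
    -- `p (max s t) ≤ min (p s) k`
    refine hgt.le.trans ?_
    have hint_i : ∀ i, IntegrableOn (fun s => μ.real {ω | max s t ≤ |X i ω|}) (Set.Ioi 0) :=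
      fun i => (integrableOn_Ioi_measureReal_le (hint i).abs
        (.of_forall fun ω => abs_nonneg _)).mono'
        ((antitone_measureReal_le _).comp_monotone
          (fun _ _ h => max_le_max h le_rfl)).measurable.aestronglyMeasurable
        (.of_forall fun s => by
          rw [Real.norm_of_nonneg measureReal_nonneg]
          exact antitone_measureReal_le _ (le_max_left s t))
    simp_rw [setIntegral_abs_ge_eq_integral_measureReal (hint _) (hX _)]
    rw [← integral_finsetSum univ fun i _ => hint_i i]
    refine integral_mono_of_nonneg (.of_forall fun s => sum_nonneg fun i _ => measureReal_nonneg)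
      hmin_int (.of_forall fun s => le_min ?_ ?_)
    · exact hp_anti (le_max_left s t)
    · exact (hp_anti (le_max_right s t)).trans hpt.le
  · calc k * t = ∫ s in Set.Ioc 0 t, min (p s) k := by
          rw [setIntegral_congr_fun measurableSet_Ioc fun s hs =>
            min_eq_right (hpt.trans (hp_anti hs.2)), setIntegral_const,
            Real.volume_real_Ioc_of_le ht.le, smul_eq_mul, sub_zero, mul_comm]
      _ ≤ ∫ s in Set.Ioi 0, min (p s) k :=
          setIntegral_mono_set hmin_int
            (.of_forall fun s => le_min (hp_nonneg s) hk) Set.Ioc_subset_Ioi_self.eventuallyLE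

end Tail

theorem natCast_card_abs_ge_eq_sum_indicator {Ω ι : Type*} [Fintype ι] (X : ι → Ω → ℝ) (s : ℝ)
    (ω : Ω) : (#{i | s ≤ |X i ω|} : ℝ) = ∑ i, {ω | s ≤ |X i ω|}.indicator (1 : Ω → ℝ) ω := by
  simp [Set.indicator_apply]

section Fubini

variable {Ω : Type*} [MeasurableSpace Ω] {μ : Measure Ω} [IsFiniteMeasure μ]
  {ι : Type*} [Fintype ι] {X : ι → Ω → ℝ}

theorem integrable_prod_indicator_Iic_abs {f : Ω → ℝ} (hfm : Measurable f)
    (hf : Integrable f μ) :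
    Integrable (fun q : ℝ × Ω => (Set.Iic |f q.2|).indicator (1 : ℝ → ℝ) q.1)
      ((volume.restrict (Set.Ioi 0)).prod μ) := by
  have hmeas : MeasurableSet {q : ℝ × Ω | q.1 ≤ |f q.2|} :=
    measurableSet_le measurable_fst (hfm.abs.comp measurable_snd)
  have hF : (fun q : ℝ × Ω => (Set.Iic |f q.2|).indicator (1 : ℝ → ℝ) q.1) =
      {q : ℝ × Ω | q.1 ≤ |f q.2|}.indicator 1 := by
    ext q
    simp [Set.indicator_apply]
  rw [integrable_prod_iff' (hF ▸ (measurable_const.indicator hmeas).aestronglyMeasurable)]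
  refine ⟨.of_forall fun ω => integrableOn_Ioi_zero_indicator_Iic |f ω|,
    hf.abs.congr (.of_forall fun ω => ?_)⟩
  exact (setIntegral_Ioi_zero_indicator_Iic (abs_nonneg (f ω))).symm.trans
    (integral_congr_ae (.of_forall fun s => (Real.norm_of_nonneg (indicator_one_nonneg _ s)).symm))

theorem integrable_prod_min_card (hX : ∀ i, Measurable (X i)) (hint : ∀ i, Integrable (X i) μ)
    {k : ℝ} (hk : 0 ≤ k) :
    Integrable (fun q : ℝ × Ω => min (#{i | q.1 ≤ |X i q.2|} : ℝ) k)
      ((volume.restrict (Set.Ioi 0)).prod μ) := by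
  have hcard : ∀ q : ℝ × Ω, (#{i | q.1 ≤ |X i q.2|} : ℝ) =
      ∑ i, (Set.Iic |X i q.2|).indicator (1 : ℝ → ℝ) q.1 := fun q => by
    simp [Set.indicator_apply]
  have hsum := integrable_finsetSum univ fun i _ =>
    integrable_prod_indicator_Iic_abs (hX i) (hint i)
  simp_rw [hcard]
  refine hsum.mono' (hsum.aestronglyMeasurable.inf aestronglyMeasurable_const)
    (.of_forall fun q => ?_)
  rw [Real.norm_of_nonneg (le_min (sum_nonneg fun i _ => indicator_one_nonneg _ _) hk)]
  exact min_le_left _ _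

end Fubini

section Threshold

variable {Ω : Type*} [MeasurableSpace Ω] {μ : Measure Ω} {n : ℕ} {X : Fin n → Ω → ℝ}

theorem tk_nonneg (k : ℝ) : 0 ≤ tk μ X k :=
  Real.sInf_nonneg fun _ ht => ht.1.le

theorem le_mul_tk (hint : ∀ i, Integrable (X i) μ) {k : ℝ} (hk : 0 < k) {B c : ℝ} (hc : 0 < c)
    (h : ∀ t, 0 < t → ∑ i, ∫ ω in {ω | t ≤ |X i ω|}, |X i ω| ∂μ ≤ k * t → B ≤ c * t) :
    B ≤ c * tk μ X k := by
  set C := ∑ i, ∫ ω, |X i ω| ∂μ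
  have hC : 0 ≤ C := sum_nonneg fun i _ => integral_nonneg fun ω => abs_nonneg _
  have hne : {t : ℝ | 0 < t ∧ ∑ i, ∫ ω in {ω | t ≤ |X i ω|}, |X i ω| ∂μ ≤ k * t}.Nonempty := by
    refine ⟨C / k + 1, by positivity, ?_⟩
    calc ∑ i, ∫ ω in {ω | C / k + 1 ≤ |X i ω|}, |X i ω| ∂μ ≤ C :=
          sum_le_sum fun i _ =>
            setIntegral_le_integral (hint i).abs (.of_forall fun ω => abs_nonneg _)
      _ ≤ k * (C / k + 1) := by rw [mul_add, mul_div_cancel₀ _ hk.ne']; linarith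
  rw [← div_le_iff₀' hc]
  exact le_csInf hne fun t ht => (div_le_iff₀' hc).2 (h t ht.1 ht.2)

theorem mul_tk_le {k : ℝ} {B c : ℝ} (hc : 0 < c) (hB : 0 ≤ B)
    (h : ∀ t, 0 < t → k * t < ∑ i, ∫ ω in {ω | t ≤ |X i ω|}, |X i ω| ∂μ → c * t ≤ B) :
    c * tk μ X k ≤ B := by
  rw [← le_div_iff₀' hc]
  refine le_of_forall_lt_imp_le_of_dense fun t htk => ?_
  rcases le_or_gt t 0 with ht | ht
  · exact ht.trans (div_nonneg hB hc.le)
  · refine (le_div_iff₀' hc).2 (h t ht (not_le.1 fun hle => htk.not_ge ?_))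
    exact csInf_le ⟨0, fun _ hs => hs.1.le⟩ ⟨ht, hle⟩

end Threshold

section Measurable

variable {Ω : Type*} [MeasurableSpace Ω] {μ : Measure Ω} {n k : ℕ} {X : Fin n → Ω → ℝ}

theorem integrable_maxKSum (hX : ∀ i, Measurable (X i)) (hint : ∀ i, Integrable (X i) μ)
    (hk : k ≤ n) : Integrable (fun ω => maxKSum k (X · ω)) μ :=
  (integrable_finsetSum univ fun i _ => (hint i).abs).mono'
    (measurable_maxKSum hX hk).aestronglyMeasurable (.of_forall fun ω => by
      rw [Real.norm_of_nonneg (maxKSum_nonneg hk _)]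
      exact maxKSum_le_sum_abs hk _)

variable [IsProbabilityMeasure μ]

theorem integral_maxKSum_le_two_mul_tk (hX : ∀ i, Measurable (X i))
    (hint : ∀ i, Integrable (X i) μ) (hk : 1 ≤ k) (hkn : k ≤ n) :
    ∫ ω, maxKSum k (X · ω) ∂μ ≤ 2 * k * tk μ X k := by
  have hk0 : (0 : ℝ) < k := by exact_mod_cast hk
  refine le_mul_tk hint hk0 (by positivity) fun t ht hsum => ?_
  have hmeas : ∀ i, MeasurableSet {ω | t ≤ |X i ω|} := fun i =>
    measurableSet_le measurable_const (hX i).abs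
  have htail : ∀ i, Integrable ({ω | t ≤ |X i ω|}.indicator fun ω => |X i ω|) μ := fun i =>
    (hint i).abs.indicator (hmeas i)
  calc ∫ ω, maxKSum k (X · ω) ∂μ
      ≤ ∫ ω, (k * t + ∑ i, {ω | t ≤ |X i ω|}.indicator (fun ω => |X i ω|) ω) ∂μ := by
        refine integral_mono (integrable_maxKSum hX hint hkn)
          ((integrable_const _).add (integrable_finsetSum univ fun i _ => htail i)) fun ω => ?_
        simpa [Set.indicator_apply] using maxKSum_le_mul_add_sum_ite hkn (X · ω) ht.le
    _ = k * t + ∑ i, ∫ ω in {ω | t ≤ |X i ω|}, |X i ω| ∂μ := by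
        rw [integral_add (integrable_const _) (integrable_finsetSum univ fun i _ => htail i),
          integral_const, probReal_univ, one_smul, integral_finsetSum univ fun i _ => htail i]
        simp_rw [integral_indicator (hmeas _)]
    _ ≤ 2 * k * t := by linarith

theorem mul_tk_div_le_integral_maxKSum (hX : ∀ i, Measurable (X i))
    (hint : ∀ i, Integrable (X i) μ) {α : ℝ} (hα : 1 ≤ α)
    (hcond : ∀ i j, i ≠ j → ∀ s t : ℝ, 0 < s → 0 < t →
      (μ {ω | s ≤ |X i ω| ∧ t ≤ |X j ω|}).toReal ≤
        α * (μ {ω | s ≤ |X i ω|}).toReal * (μ {ω | t ≤ |X j ω|}).toReal)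
    (hk : 1 ≤ k) (hkn : k ≤ n) :
    k / (8 * α) * tk μ X k ≤ ∫ ω, maxKSum k (X · ω) ∂μ := by
  have hα0 : 0 < α := by linarith
  have hk0 : (0 : ℝ) < k := by exact_mod_cast hk
  have hF := integrable_prod_min_card hX hint hk0.le
  refine mul_tk_le (by positivity) (integral_nonneg fun ω => maxKSum_nonneg hkn _)
    fun t ht hgt => ?_
  calc k / (8 * α) * t = k * t / (8 * α) := by ring
    _ ≤ (∫ s in Set.Ioi 0, min (∑ i, μ.real {ω | s ≤ |X i ω|}) k) / (8 * α) := by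
        gcongr
        exact mul_le_integral_min_sum_measureReal hX hint hk0.le ht hgt
    _ = ∫ s in Set.Ioi 0, min (∑ i, μ.real {ω | s ≤ |X i ω|}) k / (8 * α) :=
        (integral_div _ _).symm
    _ ≤ ∫ s in Set.Ioi 0, ∫ ω, min (#{i | s ≤ |X i ω|} : ℝ) k ∂μ := by
        refine integral_mono_of_nonneg (.of_forall fun s => by positivity) hF.integral_prod_left
          ((ae_restrict_iff' measurableSet_Ioi).2 (.of_forall fun s (hs : 0 < s) => ?_))
        simp_rw [natCast_card_abs_ge_eq_sum_indicator]
        exact min_sum_measureReal_div_le_integral_min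
          (fun i => measurableSet_le measurable_const (hX i).abs) hα
          (fun i j hij => hcond i j hij s s hs hs) hk
    _ = ∫ ω, (∫ s in Set.Ioi 0, min (#{i | s ≤ |X i ω|} : ℝ) k) ∂μ :=
        integral_integral_swap hF
    _ ≤ ∫ ω, maxKSum k (X · ω) ∂μ :=
        integral_mono_of_nonneg
          (.of_forall fun ω => setIntegral_nonneg measurableSet_Ioi fun s _ => by positivity)
          (integrable_maxKSum hX hint hkn) (.of_forall fun ω => integral_min_card_le_maxKSum hkn _)

end Measurable

section AeCongr

variable {Ω : Type*} [MeasurableSpace Ω] {μ : Measure Ω}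

theorem setOf_le_abs_ae_eq {f g : Ω → ℝ} (h : f =ᵐ[μ] g) (s : ℝ) :
    {ω | s ≤ |f ω|} =ᵐ[μ] {ω | s ≤ |g ω|} :=
  h.fun_comp fun r => s ≤ |r|

theorem setOf_le_abs_and_le_abs_ae_eq {f f' g g' : Ω → ℝ} (hf : f =ᵐ[μ] f') (hg : g =ᵐ[μ] g')
    (s t : ℝ) : {ω | s ≤ |f ω| ∧ t ≤ |g ω|} =ᵐ[μ] {ω | s ≤ |f' ω| ∧ t ≤ |g' ω|} :=
  (setOf_le_abs_ae_eq hf s).inter (setOf_le_abs_ae_eq hg t)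

variable {n : ℕ} {X Y : Fin n → Ω → ℝ}

theorem tk_congr_ae (h : ∀ i, X i =ᵐ[μ] Y i) (k : ℝ) : tk μ X k = tk μ Y k := by
  have hsum : ∀ t, ∑ i, ∫ ω in {ω | t ≤ |X i ω|}, |X i ω| ∂μ =
      ∑ i, ∫ ω in {ω | t ≤ |Y i ω|}, |Y i ω| ∂μ := fun t => sum_congr rfl fun i _ => by
    rw [setIntegral_congr_set (setOf_le_abs_ae_eq (h i) t)]
    exact integral_congr_ae (ae_restrict_of_ae ((h i).fun_comp abs))
  simp only [tk, hsum]

theorem integral_maxKSum_congr_ae (h : ∀ i, X i =ᵐ[μ] Y i) (k : ℕ) :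
    ∫ ω, maxKSum k (X · ω) ∂μ = ∫ ω, maxKSum k (Y · ω) ∂μ :=
  integral_congr_ae ((ae_all_iff.2 h).mono fun ω hω => by simp only [hω])

end AeCongr

theorem stmt_13 {Ω : Type*} [MeasurableSpace Ω] (μ : Measure Ω) [IsProbabilityMeasure μ]
    {n : ℕ} (X : Fin n → Ω → ℝ) (hint : ∀ i, Integrable (X i) μ)
    (α : ℝ) (hα : 1 ≤ α)
    (hcond : ∀ i j, i ≠ j → ∀ s t : ℝ, 0 < s → 0 < t →
      (μ {ω | s ≤ |X i ω| ∧ t ≤ |X j ω|}).toReal ≤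
        α * (μ {ω | s ≤ |X i ω|}).toReal * (μ {ω | t ≤ |X j ω|}).toReal) :
    ∀ k : ℕ, 1 ≤ k → k ≤ n →
      (36 * (5 + 4 * α) * (1 + 2 * α))⁻¹ * k * tk μ X k ≤
          ∫ ω, maxKSum k (fun i => X i ω) ∂μ ∧
        ∫ ω, maxKSum k (fun i => X i ω) ∂μ ≤ 2 * k * tk μ X k := by
  intro k hk hkn
  set Y : Fin n → Ω → ℝ := fun i => (hint i).1.mk (X i)
  have hXY : ∀ i, X i =ᵐ[μ] Y i := fun i => (hint i).1.ae_eq_mk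
  have hY : ∀ i, Measurable (Y i) := fun i => (hint i).1.stronglyMeasurable_mk.measurable
  have hintY : ∀ i, Integrable (Y i) μ := fun i => (hint i).congr (hXY i)
  have hcondY : ∀ i j, i ≠ j → ∀ s t : ℝ, 0 < s → 0 < t →
      (μ {ω | s ≤ |Y i ω| ∧ t ≤ |Y j ω|}).toReal ≤
        α * (μ {ω | s ≤ |Y i ω|}).toReal * (μ {ω | t ≤ |Y j ω|}).toReal := by
    intro i j hij s t hs ht
    rw [← measure_congr (setOf_le_abs_and_le_abs_ae_eq (hXY i) (hXY j) s t),
      ← measure_congr (setOf_le_abs_ae_eq (hXY i) s),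
      ← measure_congr (setOf_le_abs_ae_eq (hXY j) t)]
    exact hcond i j hij s t hs ht
  have hc : (36 * (5 + 4 * α) * (1 + 2 * α))⁻¹ * k ≤ k / (8 * α) := by
    rw [div_eq_inv_mul]
    gcongr <;> linarith
  rw [tk_congr_ae hXY, integral_maxKSum_congr_ae hXY]
  exact ⟨(mul_le_mul_of_nonneg_right hc (tk_nonneg k)).trans
      (mul_tk_div_le_integral_maxKSum hY hintY hα hcondY hk hkn),
    integral_maxKSum_le_two_mul_tk hY hintY hk hkn⟩
end
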